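/- Every nonzero lattice-linear homomorphism φ : SO → ℝ has a unique representation φ = c · δ_x for some c > 0 and x ∈ [0,∞), i.e., φ(f) = c · f(x) for all f ∈ SO, and the pair (x, c) is uniquely determined by φ. -/

import Mathlib

open Filter Metric Set

noncomputable section

/-- A continuous function on the half-line `[0,∞)` (modeled as `ℝ≥0`) is
slowly oscillating if for every `R > 0` and `ε > 0` there is `M > 0` with
`diam f([x, x+R]) < ε` for all `x > M`. -/
def SO (f : NNReal → ℝ) : Prop :=
  Continuous f ∧ ∀ R : NNReal, 0 < R → ∀ ε : ℝ, 0 < ε → ∃ M : NNReal, 0 < M ∧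
    ∀ x : NNReal, M < x → Metric.diam (f '' Set.Icc x (x + R)) < ε

/-- A lattice-linear homomorphism of the vector lattice `SO`, encoded as a
function on all of `NNReal → ℝ` whose homomorphism properties are required on
slowly oscillating functions. -/
def IsHom (φ : (NNReal → ℝ) → ℝ) : Prop :=
  (∀ f g : NNReal → ℝ, SO f → SO g → ∀ c d : ℝ,
      φ (c • f + d • g) = c * φ f + d * φ g) ∧
  (∀ f g : NNReal → ℝ, SO f → SO g → φ (f ⊔ g) = φ f ⊔ φ g) ∧
  (∀ f g : NNReal → ℝ, SO f → SO g → φ (f ⊓ g) = φ f ⊓ φ g)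



lemma SO_const (C : ℝ) : SO (fun _ => C) := by
  refine ⟨continuous_const, fun R hR ε hε => ⟨1, one_pos, fun x hx => ?_⟩⟩
  have hsub : ((fun _ : NNReal => C) '' Icc x (x + R)).Subsingleton := by
    rintro _ ⟨a, _, rfl⟩ _ ⟨b, _, rfl⟩; rfl
  rw [Metric.diam_subsingleton hsub]; exact hε

lemma SO_bounded_image {f : NNReal → ℝ} (hf : Continuous f) (x R : NNReal) :
    Bornology.IsBounded (f '' Icc x (x + R)) :=
  (isCompact_Icc.image hf).isBounded

lemma SO_comb {f g : NNReal → ℝ} (hf : SO f) (hg : SO g) (c d : ℝ) :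
    SO (c • f + d • g) := by
  have hcont : Continuous (c • f + d • g) := by
    show Continuous fun t => c * f t + d * g t
    exact (continuous_const.mul hf.1).add (continuous_const.mul hg.1)
  refine ⟨hcont, fun R hR ε hε => ?_⟩
  have hc1 : (0:ℝ) < 2 * (|c| + 1) := by positivity
  have hd1 : (0:ℝ) < 2 * (|d| + 1) := by positivity
  obtain ⟨Mf, hMf, hf2⟩ := hf.2 R hR (ε / (2 * (|c| + 1))) (by positivity)
  obtain ⟨Mg, hMg, hg2⟩ := hg.2 R hR (ε / (2 * (|d| + 1))) (by positivity)
  refine ⟨max Mf Mg, lt_max_of_lt_left hMf, fun x hx => ?_⟩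
  have h1 := hf2 x (lt_of_le_of_lt (le_max_left _ _) hx)
  have h2 := hg2 x (lt_of_le_of_lt (le_max_right _ _) hx)
  have hbf := SO_bounded_image hf.1 x R
  have hbg := SO_bounded_image hg.1 x R
  set Df := diam (f '' Icc x (x + R)) with hDf
  set Dg := diam (g '' Icc x (x + R)) with hDg
  have hDf0 : 0 ≤ Df := diam_nonneg
  have hDg0 : 0 ≤ Dg := diam_nonneg
  have key : diam ((c • f + d • g) '' Icc x (x + R)) ≤ |c| * Df + |d| * Dg := by
    refine diam_le_of_forall_dist_le (by positivity) ?_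
    rintro _ ⟨a, ha, rfl⟩ _ ⟨b, hb, rfl⟩
    have dfa : dist (f a) (f b) ≤ Df := dist_le_diam_of_mem hbf ⟨a, ha, rfl⟩ ⟨b, hb, rfl⟩
    have dga : dist (g a) (g b) ≤ Dg := dist_le_diam_of_mem hbg ⟨a, ha, rfl⟩ ⟨b, hb, rfl⟩
    rw [Real.dist_eq] at dfa dga ⊢
    have heq : (c • f + d • g) a - (c • f + d • g) b
        = c * (f a - f b) + d * (g a - g b) := by
      simp only [Pi.add_apply, Pi.smul_apply, smul_eq_mul]; ring
    rw [heq]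
    refine (abs_add_le _ _).trans ?_
    rw [abs_mul, abs_mul]
    exact add_le_add (mul_le_mul_of_nonneg_left dfa (abs_nonneg c))
      (mul_le_mul_of_nonneg_left dga (abs_nonneg d))
  have hfin : |c| * Df + |d| * Dg < ε := by
    have e1 : |c| * Df ≤ |c| * (ε / (2 * (|c| + 1))) :=
      mul_le_mul_of_nonneg_left h1.le (abs_nonneg c)
    have e2 : |d| * Dg ≤ |d| * (ε / (2 * (|d| + 1))) :=
      mul_le_mul_of_nonneg_left h2.le (abs_nonneg d)
    have k3 : (|c| + 1) * (ε / (2 * (|c| + 1))) = ε / 2 := by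
      field_simp
    have k4 : (|d| + 1) * (ε / (2 * (|d| + 1))) = ε / 2 := by
      field_simp
    have e3 : |c| * (ε / (2 * (|c| + 1))) < ε / 2 := by
      rw [← k3]
      exact mul_lt_mul_of_pos_right (by linarith) (by positivity)
    have e4 : |d| * (ε / (2 * (|d| + 1))) < ε / 2 := by
      rw [← k4]
      exact mul_lt_mul_of_pos_right (by linarith) (by positivity)
    linarith
  exact lt_of_le_of_lt key hfin

lemma SO_sup {f g : NNReal → ℝ} (hf : SO f) (hg : SO g) : SO (f ⊔ g) := by
  have hcont : Continuous (f ⊔ g) := by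
    show Continuous fun t => max (f t) (g t)
    exact hf.1.max hg.1
  refine ⟨hcont, fun R hR ε hε => ?_⟩
  obtain ⟨Mf, hMf, hf2⟩ := hf.2 R hR (ε / 2) (by positivity)
  obtain ⟨Mg, hMg, hg2⟩ := hg.2 R hR (ε / 2) (by positivity)
  refine ⟨max Mf Mg, lt_max_of_lt_left hMf, fun x hx => ?_⟩
  have h1 := hf2 x (lt_of_le_of_lt (le_max_left _ _) hx)
  have h2 := hg2 x (lt_of_le_of_lt (le_max_right _ _) hx)
  have hbf := SO_bounded_image hf.1 x R
  have hbg := SO_bounded_image hg.1 x R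
  have key : diam ((f ⊔ g) '' Icc x (x + R)) ≤ ε / 2 := by
    refine diam_le_of_forall_dist_le (by positivity) ?_
    rintro _ ⟨a, ha, rfl⟩ _ ⟨b, hb, rfl⟩
    have dfa : dist (f a) (f b) ≤ diam (f '' Icc x (x + R)) :=
      dist_le_diam_of_mem hbf ⟨a, ha, rfl⟩ ⟨b, hb, rfl⟩
    have dga : dist (g a) (g b) ≤ diam (g '' Icc x (x + R)) :=
      dist_le_diam_of_mem hbg ⟨a, ha, rfl⟩ ⟨b, hb, rfl⟩
    rw [Real.dist_eq] at dfa dga ⊢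
    have := abs_max_sub_max_le_max (f a) (g a) (f b) (g b)
    simp only [Pi.sup_apply]
    refine this.trans ?_
    exact max_le (by linarith) (by linarith)
  linarith

abbrev oneF : NNReal → ℝ := fun _ => (1:ℝ)

lemma SO_one : SO oneF := SO_const 1

lemma SO_zero : SO (0 : NNReal → ℝ) := by
  have := SO_const 0
  convert this using 1
  rfl

lemma SO_add {f g : NNReal → ℝ} (hf : SO f) (hg : SO g) : SO (f + g) := by
  have := SO_comb hf hg 1 1
  simpa [one_smul] using this

lemma SO_constFun (C : ℝ) : SO (fun _ : NNReal => C) := SO_const C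

section homlemmas

variable {φ : (NNReal → ℝ) → ℝ}

lemma hom_add (hφ : IsHom φ) {f g : NNReal → ℝ} (hf : SO f) (hg : SO g) :
    φ (f + g) = φ f + φ g := by
  have := hφ.1 f g hf hg 1 1
  simpa [one_smul] using this

lemma hom_smul (hφ : IsHom φ) {f : NNReal → ℝ} (hf : SO f) (c : ℝ) : φ (c • f) = c * φ f := by
  have h := hφ.1 f f hf hf c 0
  rw [zero_smul, add_zero, zero_mul, add_zero] at h
  exact h

lemma hom_zero (hφ : IsHom φ) : φ (0 : NNReal → ℝ) = 0 := by
  have h := hom_smul hφ SO_zero 0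
  rw [zero_smul, zero_mul] at h
  exact h

lemma hom_mono (hφ : IsHom φ) {f g : NNReal → ℝ} (hf : SO f) (hg : SO g) (hle : f ≤ g) :
    φ f ≤ φ g := by
  have h1 : f ⊔ g = g := sup_eq_right.mpr hle
  have h2 := hφ.2.1 f g hf hg
  rw [h1] at h2
  exact le_sup_left.trans h2.ge

lemma hom_nonneg (hφ : IsHom φ) {f : NNReal → ℝ} (hf : SO f) (h0 : ∀ x, 0 ≤ f x) : 0 ≤ φ f := by
  have := hom_mono hφ SO_zero hf (by intro x; exact h0 x)
  rwa [hom_zero hφ] at this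

lemma hom_const (hφ : IsHom φ) (C : ℝ) : φ (fun _ => C) = C * φ oneF := by
  have h : (fun _ : NNReal => C) = C • oneF := by
    funext t; simp [smul_eq_mul]
  rw [h, hom_smul hφ SO_one]

end homlemmas

def Gfun (e : ℕ → ℝ) (x : NNReal) : ℝ :=
  (∑ k ∈ Finset.range ⌊x⌋₊, e k) + ((x:ℝ) - ⌊x⌋₊) * e ⌊x⌋₊

lemma Gfun_diff (e : ℕ → ℝ) (he0 : ∀ k, 0 ≤ e k) {B : ℝ} (hB : 0 ≤ B)
    {x y : NNReal} (hxy : x ≤ y) (hBk : ∀ k : ℕ, ⌊x⌋₊ ≤ k → e k ≤ B) :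
    0 ≤ Gfun e y - Gfun e x ∧ Gfun e y - Gfun e x ≤ B * ((y:ℝ) - (x:ℝ)) := by
  obtain ⟨n, hn⟩ : ∃ n, ⌊x⌋₊ = n := ⟨_, rfl⟩
  obtain ⟨m, hm⟩ : ∃ m, ⌊y⌋₊ = m := ⟨_, rfl⟩
  have hnm : n ≤ m := hn ▸ hm ▸ Nat.floor_mono hxy
  have hxn : (n:ℝ) ≤ x := by
    rw [← hn]; exact_mod_cast Nat.floor_le (zero_le : (0:NNReal) ≤ x)
  have hxn1 : (x:ℝ) < n + 1 := by
    rw [← hn]; exact_mod_cast Nat.lt_floor_add_one x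
  have hym : (m:ℝ) ≤ y := by
    rw [← hm]; exact_mod_cast Nat.floor_le (zero_le : (0:NNReal) ≤ y)
  have hym1 : (y:ℝ) < m + 1 := by
    rw [← hm]; exact_mod_cast Nat.lt_floor_add_one y
  have hxyR : (x:ℝ) ≤ (y:ℝ) := hxy
  have hBn : e n ≤ B := hBk n (le_of_eq hn)
  have hBm : e m ≤ B := hBk m (hn ▸ hnm)
  rw [Gfun, Gfun, hn, hm]
  rcases eq_or_lt_of_le hnm with heq | hlt
  · subst heq
    have hre : ((∑ k ∈ Finset.range n, e k) + ((y:ℝ) - n) * e n)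
        - ((∑ k ∈ Finset.range n, e k) + ((x:ℝ) - n) * e n)
        = ((y:ℝ) - (x:ℝ)) * e n := by ring
    rw [hre]
    constructor
    · exact mul_nonneg (by linarith) (he0 n)
    · rw [mul_comm B]
      exact mul_le_mul_of_nonneg_left hBn (by linarith)
  · have hsucc : n + 1 ≤ m := hlt
    have hsum : ∑ k ∈ Finset.range m, e k
        = (∑ k ∈ Finset.range n, e k) + e n + ∑ k ∈ Finset.Ico (n+1) m, e k := by
      rw [Finset.range_eq_Ico,
        ← Finset.sum_Ico_consecutive e (Nat.zero_le n) (le_of_lt hlt),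
        ← Finset.sum_Ico_consecutive e (Nat.le_succ n) hsucc,
        Nat.Ico_succ_singleton, Finset.sum_singleton, add_assoc, ← Finset.range_eq_Ico]
    have hdiff : ((∑ k ∈ Finset.range m, e k) + ((y:ℝ) - m) * e m)
        - ((∑ k ∈ Finset.range n, e k) + ((x:ℝ) - n) * e n)
        = ((n:ℝ) + 1 - x) * e n + (∑ k ∈ Finset.Ico (n+1) m, e k)
          + ((y:ℝ) - m) * e m := by
      rw [hsum]; ring
    rw [hdiff]
    have hIco0 : 0 ≤ ∑ k ∈ Finset.Ico (n+1) m, e k :=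
      Finset.sum_nonneg fun k _ => he0 k
    have hIcoB : ∑ k ∈ Finset.Ico (n+1) m, e k ≤ ((m:ℝ) - ((n:ℝ)+1)) * B := by
      have hle := Finset.sum_le_card_nsmul (Finset.Ico (n+1) m) e B
        (fun k hk => hBk k (by
          have := (Finset.mem_Ico.mp hk).1; omega))
      rw [Nat.card_Ico, nsmul_eq_mul, Nat.cast_sub hsucc] at hle
      calc ∑ k ∈ Finset.Ico (n+1) m, e k ≤ ((m:ℝ) - ((n+1:ℕ):ℝ)) * B := hle
        _ = ((m:ℝ) - ((n:ℝ)+1)) * B := by push_cast; ring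
    constructor
    · have t1 : 0 ≤ ((n:ℝ)+1-x) * e n := mul_nonneg (by linarith) (he0 n)
      have t3 : 0 ≤ ((y:ℝ)-m) * e m := mul_nonneg (by linarith) (he0 m)
      linarith
    · have t1 : ((n:ℝ)+1-x) * e n ≤ ((n:ℝ)+1-x) * B :=
        mul_le_mul_of_nonneg_left hBn (by linarith)
      have t3 : ((y:ℝ)-m) * e m ≤ ((y:ℝ)-m) * B :=
        mul_le_mul_of_nonneg_left hBm (by linarith)
      have total : ((n:ℝ)+1-x) * B + ((m:ℝ)-((n:ℝ)+1)) * B + ((y:ℝ)-m) * B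
          = B * ((y:ℝ) - (x:ℝ)) := by ring
      linarith

lemma Gfun_nonneg (e : ℕ → ℝ) (he0 : ∀ k, 0 ≤ e k) (x : NNReal) : 0 ≤ Gfun e x := by
  have h1 : (0:ℝ) ≤ ∑ k ∈ Finset.range ⌊x⌋₊, e k := Finset.sum_nonneg fun k _ => he0 k
  have h2 : ((⌊x⌋₊:ℕ):ℝ) ≤ (x:ℝ) := by exact_mod_cast Nat.floor_le (zero_le : (0:NNReal) ≤ x)
  have h3 : (0:ℝ) ≤ ((x:ℝ) - ⌊x⌋₊) * e ⌊x⌋₊ := mul_nonneg (by linarith) (he0 _)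
  have : Gfun e x = (∑ k ∈ Finset.range ⌊x⌋₊, e k) + ((x:ℝ) - ⌊x⌋₊) * e ⌊x⌋₊ := rfl
  linarith [this.ge]

lemma Gfun_mono (e : ℕ → ℝ) (he0 : ∀ k, 0 ≤ e k) {D : ℝ} (hD : ∀ k, e k ≤ D)
    {a b : NNReal} (hab : a ≤ b) : Gfun e a ≤ Gfun e b := by
  have hD0 : 0 ≤ D := le_trans (he0 0) (hD 0)
  linarith [(Gfun_diff e he0 hD0 hab (fun k _ => hD k)).1]

lemma Gfun_continuous (e : ℕ → ℝ) (he0 : ∀ k, 0 ≤ e k) {D : ℝ} (hD : ∀ k, e k ≤ D) :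
    Continuous (Gfun e) := by
  have hD0 : 0 ≤ D := le_trans (he0 0) (hD 0)
  rw [Metric.continuous_iff]
  intro x ε hε
  refine ⟨ε / (D + 1), by positivity, fun y hy => ?_⟩
  have key : ∀ a b : NNReal, a ≤ b → dist (Gfun e b) (Gfun e a) ≤ D * dist b a := by
    intro a b hab
    obtain ⟨h1, h2⟩ := Gfun_diff e he0 hD0 hab (fun k _ => hD k)
    rw [Real.dist_eq, abs_of_nonneg h1, NNReal.dist_eq,
      abs_of_nonneg (by exact_mod_cast sub_nonneg.mpr (NNReal.coe_le_coe.mpr hab))]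
    exact h2
  have hfin : ∀ a b : NNReal, dist a b < ε / (D+1) → dist (Gfun e a) (Gfun e b) < ε := by
    intro a b hab
    rcases le_total a b with h | h
    · rw [dist_comm]
      calc dist (Gfun e b) (Gfun e a) ≤ D * dist b a := key a b h
        _ ≤ D * (ε / (D+1)) := by
            refine mul_le_mul_of_nonneg_left ?_ hD0
            rw [dist_comm]; exact hab.le
        _ < ε := by
            have hfe : (D+1) * (ε/(D+1)) = ε := by field_simp
            calc D * (ε / (D+1)) < (D+1) * (ε/(D+1)) :=
                mul_lt_mul_of_pos_right (by linarith) (by positivity)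
              _ = ε := hfe
    · calc dist (Gfun e a) (Gfun e b) ≤ D * dist a b := key b a h
        _ ≤ D * (ε / (D+1)) := mul_le_mul_of_nonneg_left hab.le hD0
        _ < ε := by
            have hfe : (D+1) * (ε/(D+1)) = ε := by field_simp
            calc D * (ε / (D+1)) < (D+1) * (ε/(D+1)) :=
                mul_lt_mul_of_pos_right (by linarith) (by positivity)
              _ = ε := hfe
  exact hfin y x hy

lemma Gfun_SO (e : ℕ → ℝ) (he0 : ∀ k, 0 ≤ e k) {D : ℝ} (hD : ∀ k, e k ≤ D)
    (hsmall : ∀ ε : ℝ, 0 < ε → ∃ N : ℕ, ∀ k, N ≤ k → e k < ε) : SO (Gfun e) := by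
  refine ⟨Gfun_continuous e he0 hD, fun R hR ε hε => ?_⟩
  have hR' : (0:ℝ) < R := hR
  obtain ⟨N, hN⟩ := hsmall (ε / (2*((R:ℝ)+1))) (by positivity)
  refine ⟨(N:NNReal) + 1, lt_of_lt_of_le one_pos le_add_self, fun x hx => ?_⟩
  have hfl : N ≤ ⌊x⌋₊ := Nat.le_floor (le_of_lt (lt_of_le_of_lt le_self_add hx))
  have himg : Gfun e '' Icc x (x+R) ⊆ Icc (Gfun e x) (Gfun e (x+R)) := by
    rintro _ ⟨t, ht, rfl⟩
    exact ⟨Gfun_mono e he0 hD ht.1, Gfun_mono e he0 hD ht.2⟩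
  have hdiam : diam (Gfun e '' Icc x (x+R)) ≤ Gfun e (x+R) - Gfun e x := by
    refine (diam_mono himg (isBounded_Icc _ _)).trans ?_
    rw [Real.diam_Icc (Gfun_mono e he0 hD le_self_add)]
  have hkey := Gfun_diff e he0 (B := ε/(2*((R:ℝ)+1))) (by positivity)
      (le_self_add : x ≤ x + R)
      (fun k hk => le_of_lt (hN k (le_trans hfl hk)))
  have hcoe : ((x+R : NNReal):ℝ) - (x:ℝ) = R := by push_cast; ring
  have final : Gfun e (x+R) - Gfun e x ≤ ε/(2*((R:ℝ)+1)) * R := by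
    have h2 := hkey.2
    rw [hcoe] at h2
    exact h2
  have hlt : ε/(2*((R:ℝ)+1)) * (R:ℝ) < ε := by
    rw [div_mul_eq_mul_div, div_lt_iff₀ (by positivity)]
    nlinarith [hε, hR']
  linarith

lemma abs_hom {φ : (NNReal → ℝ) → ℝ} (hφ : IsHom φ) {f : NNReal → ℝ} (hf : SO f) :
    ∃ g : NNReal → ℝ, SO g ∧ (∀ x, g x = |f x|) ∧ φ g = |φ f| := by
  have hf' : SO ((-1:ℝ) • f + (0:ℝ) • f) := SO_comb hf hf (-1) 0
  refine ⟨f ⊔ ((-1:ℝ) • f + (0:ℝ) • f), SO_sup hf hf', ?_, ?_⟩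
  · intro x
    simp only [Pi.sup_apply, Pi.add_apply, Pi.smul_apply, smul_eq_mul, neg_one_mul,
      zero_mul, add_zero]
    rw [abs_eq_max_neg]
  · rw [hφ.2.1 f _ hf hf', hφ.1 f f hf hf (-1) 0]
    rw [abs_eq_max_neg]
    congr 1
    ring

lemma hom_one_pos {φ : (NNReal → ℝ) → ℝ} (hφ : IsHom φ)
    (hne : ∃ f : NNReal → ℝ, SO f ∧ φ f ≠ 0) : 0 < φ oneF := by
  have h0 : 0 ≤ φ oneF := hom_nonneg hφ SO_one fun x => zero_le_one
  rcases h0.lt_or_eq with h | h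
  · exact h
  exfalso
  have hc0 : φ oneF = 0 := h.symm
  obtain ⟨f, hf, hφf⟩ := hne
  obtain ⟨g, hg, hgabs, hφgabs⟩ := abs_hom hφ hf
  have hg0 : ∀ x, 0 ≤ g x := fun x => by rw [hgabs x]; exact abs_nonneg _
  have hφg : 0 < φ g := by rw [hφgabs]; exact abs_pos.mpr hφf
  -- oscillation sequence
  set δ : ℕ → ℝ := fun k => diam (g '' Icc (k : NNReal) ((k:NNReal) + 1)) with hδdef
  have hδ0 : ∀ k, 0 ≤ δ k := fun k => diam_nonneg
  have hδsmall : ∀ ε : ℝ, 0 < ε → ∃ N : ℕ, ∀ k, N ≤ k → δ k < ε := by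
    intro ε hε
    obtain ⟨M, hM0, hM⟩ := hg.2 1 one_pos ε hε
    refine ⟨⌊M⌋₊ + 1, fun k hk => ?_⟩
    have hMk : M < (k : NNReal) := by
      calc M < (⌊M⌋₊ : NNReal) + 1 := Nat.lt_floor_add_one M
        _ = ((⌊M⌋₊ + 1 : ℕ) : NNReal) := by push_cast; ring
        _ ≤ (k : NNReal) := by exact_mod_cast hk
    exact hM k hMk
  have hstep : ∀ k : ℕ, ∀ x ∈ Icc (k:NNReal) ((k:NNReal)+1), |g x - g k| ≤ δ k := by
    intro k x hx
    have hb := SO_bounded_image hg.1 (k:NNReal) 1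
    have hmem : (k:NNReal) ∈ Icc (k:NNReal) ((k:NNReal)+1) := ⟨le_refl _, le_self_add⟩
    have := dist_le_diam_of_mem hb ⟨x, hx, rfl⟩ ⟨(k:NNReal), hmem, rfl⟩
    rwa [Real.dist_eq] at this
  have hgn : ∀ n : ℕ, g n ≤ g 0 + ∑ k ∈ Finset.range n, δ k := by
    intro n
    induction n with
    | zero => simp
    | succ n ih =>
      have h1 := hstep n ((n:NNReal)+1) ⟨le_self_add, le_refl _⟩
      have h2 : g ((n:NNReal)+1) ≤ g n + δ n := by linarith [(abs_le.mp h1).2]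
      have hc : (((n+1:ℕ)) : NNReal) = (n:NNReal)+1 := by push_cast; ring
      rw [Finset.sum_range_succ, hc]
      linarith
  -- the fast-growing comparison function
  obtain ⟨N₁, hN₁⟩ := hδsmall 1 one_pos
  set e : ℕ → ℝ := fun k => Real.sqrt (δ k) with hedef
  have he0 : ∀ k, 0 ≤ e k := fun k => Real.sqrt_nonneg _
  set D : ℝ := 1 + ∑ k ∈ Finset.range N₁, e k with hDdef
  have hsum0 : (0:ℝ) ≤ ∑ k ∈ Finset.range N₁, e k := Finset.sum_nonneg fun k _ => he0 k
  have hD1 : (1:ℝ) ≤ D := by rw [hDdef]; linarith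
  have hDe : ∀ k, e k ≤ D := by
    intro k
    by_cases hk : k < N₁
    · have := Finset.single_le_sum (fun j _ => he0 j) (Finset.mem_range.mpr hk)
      rw [hDdef]; linarith
    · push_neg at hk
      have h1 : δ k < 1 := hN₁ k hk
      have h2 : e k ≤ 1 := Real.sqrt_le_one.mpr h1.le
      linarith
  have hesmall : ∀ ε : ℝ, 0 < ε → ∃ N : ℕ, ∀ k, N ≤ k → e k < ε := by
    intro ε hε
    obtain ⟨N, hN⟩ := hδsmall (ε^2) (by positivity)
    refine ⟨N, fun k hk => ?_⟩
    have := hN k hk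
    calc e k = Real.sqrt (δ k) := rfl
      _ < Real.sqrt (ε^2) := Real.sqrt_lt_sqrt (hδ0 k) this
      _ = ε := Real.sqrt_sq hε.le
  set G := Gfun e with hGdef
  have hGSO : SO G := Gfun_SO e he0 hDe hesmall
  have hG0 : ∀ x, 0 ≤ G x := Gfun_nonneg e he0
  have hφG : 0 ≤ φ G := hom_nonneg hφ hGSO hG0
  -- domination
  have hdom : ∀ ε : ℝ, 0 < ε → φ g ≤ ε * φ G := by
    intro ε hε
    obtain ⟨K, hK⟩ := hesmall ε hε
    set C : ℝ := g 0 + (∑ k ∈ Finset.range K, δ k) + ε * D with hCdef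
    have hptwise : ∀ x : NNReal, g x ≤ ε * G x + C := by
      intro x
      have hfl1 : ((⌊x⌋₊:ℕ):NNReal) ≤ x := Nat.floor_le (zero_le : (0:NNReal) ≤ x)
      have hfl2 : x ≤ ((⌊x⌋₊:ℕ):NNReal) + 1 := (Nat.lt_floor_add_one x).le
      have hx1 : g x ≤ g (⌊x⌋₊ : NNReal) + δ ⌊x⌋₊ := by
        have := hstep ⌊x⌋₊ x ⟨hfl1, hfl2⟩
        linarith [(abs_le.mp this).2]
      have hx2 : g ((⌊x⌋₊:ℕ):NNReal) ≤ g 0 + ∑ k ∈ Finset.range ⌊x⌋₊, δ k := by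
        have := hgn ⌊x⌋₊
        simpa using this
      have hx3 : ∑ k ∈ Finset.range (⌊x⌋₊+1), δ k
          ≤ (∑ k ∈ Finset.range K, δ k) + ε * ∑ k ∈ Finset.range (⌊x⌋₊+1), e k := by
        have hterm : ∀ k ∈ Finset.range (⌊x⌋₊+1),
            δ k ≤ (if k < K then δ k else 0) + ε * e k := by
          intro k _
          by_cases hk : k < K
          · simp only [hk, if_true]
            have : 0 ≤ ε * e k := mul_nonneg hε.le (he0 k)
            linarith
          · simp only [hk, if_false, zero_add]
            push_neg at hk
            have h1 : e k * e k = δ k := Real.mul_self_sqrt (hδ0 k)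
            nlinarith [hK k hk, he0 k]
        calc ∑ k ∈ Finset.range (⌊x⌋₊+1), δ k
            ≤ ∑ k ∈ Finset.range (⌊x⌋₊+1), ((if k < K then δ k else 0) + ε * e k) :=
              Finset.sum_le_sum hterm
          _ = (∑ k ∈ Finset.range (⌊x⌋₊+1), if k < K then δ k else 0)
              + ε * ∑ k ∈ Finset.range (⌊x⌋₊+1), e k := by
              rw [Finset.sum_add_distrib, Finset.mul_sum]
          _ ≤ (∑ k ∈ Finset.range K, δ k) + ε * ∑ k ∈ Finset.range (⌊x⌋₊+1), e k := by
              have hss : (∑ k ∈ Finset.range (⌊x⌋₊+1), if k < K then δ k else 0)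
                  ≤ ∑ k ∈ Finset.range K, δ k := by
                rw [← Finset.sum_filter]
                refine Finset.sum_le_sum_of_subset_of_nonneg ?_ (fun i _ _ => hδ0 i)
                intro k hk
                rw [Finset.mem_filter] at hk
                exact Finset.mem_range.mpr hk.2
              linarith
      have hx4 : ∑ k ∈ Finset.range (⌊x⌋₊+1), e k ≤ G x + D := by
        rw [Finset.sum_range_succ]
        have hGx : G x = (∑ k ∈ Finset.range ⌊x⌋₊, e k) + ((x:ℝ) - ⌊x⌋₊) * e ⌊x⌋₊ := rfl
        have hfr : (0:ℝ) ≤ ((x:ℝ) - ⌊x⌋₊) * e ⌊x⌋₊ := by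
          have : ((⌊x⌋₊:ℕ):ℝ) ≤ (x:ℝ) := by exact_mod_cast hfl1
          exact mul_nonneg (by linarith) (he0 _)
        have := hDe ⌊x⌋₊
        linarith
      have hεG : ε * (∑ k ∈ Finset.range (⌊x⌋₊+1), e k) ≤ ε * (G x + D) :=
        mul_le_mul_of_nonneg_left hx4 hε.le
      have hsucc := Finset.sum_range_succ δ ⌊x⌋₊
      rw [hCdef]
      linarith
    set h2 : NNReal → ℝ := ε • G + C • oneF with hh2
    have hh2SO : SO h2 := SO_comb hGSO SO_one ε C
    have hle : g ≤ h2 := by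
      intro x
      have := hptwise x
      simp only [hh2, Pi.add_apply, Pi.smul_apply, smul_eq_mul, mul_one]
      linarith
    have hm := hom_mono hφ hg hh2SO hle
    rw [hh2, hφ.1 G oneF hGSO SO_one ε C, hc0] at hm
    linarith
  -- contradiction
  have hd2 : (0:ℝ) < 2 * (φ G + 1) := by linarith
  have h1 := hdom (φ g / (2 * (φ G + 1))) (div_pos hφg hd2)
  rw [div_mul_eq_mul_div, le_div_iff₀ hd2] at h1
  nlinarith [hφg, hφG]

lemma SO_sqrt : SO (fun x : NNReal => Real.sqrt x) := by
  refine ⟨Real.continuous_sqrt.comp NNReal.continuous_coe, fun R hR ε hε => ?_⟩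
  have hR' : (0:ℝ) < R := hR
  refine ⟨1 + (Real.toNNReal ((R:ℝ)/ε))^2, lt_of_lt_of_le one_pos le_self_add,
    fun x hx => ?_⟩
  have hx1 : (1:NNReal) ≤ x := le_of_lt (lt_of_le_of_lt le_self_add hx)
  have hx0 : (0:ℝ) < x := lt_of_lt_of_le one_pos (by exact_mod_cast hx1)
  have hsx : 0 < Real.sqrt x := Real.sqrt_pos.mpr hx0
  have hxR : ((R:ℝ)/ε)^2 < (x:ℝ) := by
    have h1 : (Real.toNNReal ((R:ℝ)/ε))^2 < x := lt_of_le_of_lt le_add_self hx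
    have h2 : ((Real.toNNReal ((R:ℝ)/ε) : NNReal) : ℝ) = (R:ℝ)/ε :=
      Real.coe_toNNReal _ (by positivity)
    calc ((R:ℝ)/ε)^2 = (((Real.toNNReal ((R:ℝ)/ε))^2 : NNReal) : ℝ) := by
          rw [NNReal.coe_pow, h2]
      _ < x := by exact_mod_cast h1
  have himg : (fun t : NNReal => Real.sqrt t) '' Icc x (x+R)
      ⊆ Icc (Real.sqrt x) (Real.sqrt ((x:ℝ)+R)) := by
    rintro _ ⟨t, ht, rfl⟩
    constructor
    · exact Real.sqrt_le_sqrt (by exact_mod_cast ht.1)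
    · refine Real.sqrt_le_sqrt ?_
      have := ht.2
      have : (t:ℝ) ≤ ((x + R : NNReal):ℝ) := by exact_mod_cast this
      rwa [NNReal.coe_add] at this
  have hxle : Real.sqrt x ≤ Real.sqrt ((x:ℝ)+R) := Real.sqrt_le_sqrt (by linarith)
  have h1 : diam ((fun t : NNReal => Real.sqrt t) '' Icc x (x+R))
      ≤ Real.sqrt ((x:ℝ)+R) - Real.sqrt x := by
    refine (diam_mono himg (isBounded_Icc _ _)).trans ?_
    rw [Real.diam_Icc hxle]
  have hms : Real.sqrt x * Real.sqrt x = x := Real.mul_self_sqrt hx0.le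
  have hmd : Real.sqrt x * ((R:ℝ) / Real.sqrt x) = R := by field_simp
  have key : Real.sqrt ((x:ℝ)+R) ≤ Real.sqrt x + (R:ℝ)/Real.sqrt x := by
    rw [show Real.sqrt x + (R:ℝ)/Real.sqrt x
        = Real.sqrt ((Real.sqrt x + (R:ℝ)/Real.sqrt x)^2) from
      (Real.sqrt_sq (by positivity)).symm]
    refine Real.sqrt_le_sqrt ?_
    nlinarith [sq_nonneg ((R:ℝ)/Real.sqrt x), hR'.le]
  have last : (R:ℝ) / Real.sqrt x < ε := by
    have h2 : (R:ℝ)/ε < Real.sqrt x := by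
      have := Real.sqrt_lt_sqrt (sq_nonneg ((R:ℝ)/ε)) hxR
      rwa [Real.sqrt_sq (by positivity)] at this
    rw [div_lt_iff₀ hsx]
    calc (R:ℝ) = ((R:ℝ)/ε) * ε := by field_simp
      _ < Real.sqrt x * ε := mul_lt_mul_of_pos_right h2 hε
      _ = ε * Real.sqrt x := by ring
  linarith

theorem stmt_12 (φ : (NNReal → ℝ) → ℝ) (hφ : IsHom φ)
    (hne : ∃ f : NNReal → ℝ, SO f ∧ φ f ≠ 0) :
    ∃! p : NNReal × ℝ, 0 < p.2 ∧ ∀ f : NNReal → ℝ, SO f → φ f = p.2 * f p.1 := by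
  have hc : 0 < φ oneF := hom_one_pos hφ hne
  set c := φ oneF with hcdef
  have hone : SO oneF := SO_one
  set s : NNReal → ℝ := fun x => Real.sqrt x with hsdef
  have hs : SO s := SO_sqrt
  set a := φ s with hadef
  set n : ℕ := ⌊a / c⌋₊ + 1 with hndef
  have hna : a < c * n := by
    have h1 : a / c < (n:ℝ) := by
      rw [hndef]; push_cast
      exact Nat.lt_floor_add_one _
    calc a = c * (a / c) := by field_simp
      _ < c * n := mul_lt_mul_of_pos_left h1 hc
  set f1 : NNReal → ℝ := (1:ℝ) • s + (-(n:ℝ)) • oneF with hf1def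
  have hf1SO : SO f1 := SO_comb hs hone 1 (-(n:ℝ))
  have hf1val : ∀ t : NNReal, f1 t = Real.sqrt t - n := by
    intro t
    simp only [hf1def, Pi.add_apply, Pi.smul_apply, smul_eq_mul, one_mul]
    ring
  have hφf1 : φ f1 = a - n * c := by
    rw [hf1def, hφ.1 s oneF hs hone 1 (-(n:ℝ)), ← hcdef, ← hadef]; ring
  set u : NNReal → ℝ := f1 ⊔ (0 : NNReal → ℝ) with hudef
  have huSO : SO u := SO_sup hf1SO SO_zero
  have huval : ∀ t, u t = max (f1 t) 0 := fun t => rfl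
  have hφu : φ u = 0 := by
    rw [hudef, hφ.2.1 f1 0 hf1SO SO_zero, hom_zero hφ, hφf1]
    have hle : a - (n:ℝ) * c ≤ 0 := by nlinarith [hna]
    exact sup_eq_right.mpr hle
  have hu0 : ∀ t, 0 ≤ u t := fun t => le_max_right _ _
  have hu1 : ∀ t : NNReal, ((n:ℝ)+1)^2 ≤ (t:ℝ) → 1 ≤ u t := by
    intro t ht
    have h1 : ((n:ℝ)+1) ≤ Real.sqrt t := by
      rw [show ((n:ℝ)+1) = Real.sqrt (((n:ℝ)+1)^2) from
        (Real.sqrt_sq (by positivity)).symm]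
      exact Real.sqrt_le_sqrt ht
    rw [huval t, hf1val t]
    calc (1:ℝ) ≤ Real.sqrt t - n := by linarith
      _ ≤ max (Real.sqrt t - n) 0 := le_max_left _ _
  set B : NNReal := ((n:NNReal)+1)^2 with hBdef
  have hBcoe : ((B:NNReal):ℝ) = ((n:ℝ)+1)^2 := by rw [hBdef]; push_cast; ring
  -- the kernel family
  have hFIP : ∀ (t : Finset {h : NNReal → ℝ // SO h ∧ (∀ x, 0 ≤ h x) ∧ φ h = 0}),
      (Icc (0:NNReal) B ∩ ⋂ i ∈ t, (i : {h : NNReal → ℝ // SO h ∧ (∀ x, 0 ≤ h x) ∧ φ h = 0}).1 ⁻¹' {0}).Nonempty := by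
    intro t
    set F : NNReal → ℝ := u + ∑ i ∈ t, i.1 with hFdef
    have hsumP : SO (∑ i ∈ t, (i : {h : NNReal → ℝ // SO h ∧ (∀ x, 0 ≤ h x) ∧ φ h = 0}).1)
        ∧ φ (∑ i ∈ t, (i : {h : NNReal → ℝ // SO h ∧ (∀ x, 0 ≤ h x) ∧ φ h = 0}).1) = 0 := by
      refine Finset.sum_induction _ (fun h => SO h ∧ φ h = 0) ?_ ?_ ?_
      · rintro f' g' ⟨hf', hpf'⟩ ⟨hg', hpg'⟩
        exact ⟨SO_add hf' hg', by rw [hom_add hφ hf' hg', hpf', hpg', add_zero]⟩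
      · exact ⟨SO_zero, hom_zero hφ⟩
      · rintro i -
        exact ⟨i.2.1, i.2.2.2⟩
    have hFSO : SO F := SO_add huSO hsumP.1
    have hφF : φ F = 0 := by
      rw [hFdef, hom_add hφ huSO hsumP.1, hφu, hsumP.2, add_zero]
    have hF0 : ∀ x, 0 ≤ F x := by
      intro x
      have h1 : 0 ≤ (∑ i ∈ t, (i : {h : NNReal → ℝ // SO h ∧ (∀ x, 0 ≤ h x) ∧ φ h = 0}).1) x := by
        rw [Finset.sum_apply]
        exact Finset.sum_nonneg fun i _ => i.2.2.1 x
      have h2 : F x = u x + (∑ i ∈ t, (i : {h : NNReal → ℝ // SO h ∧ (∀ x, 0 ≤ h x) ∧ φ h = 0}).1) x := rfl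
      rw [h2]
      linarith [hu0 x]
    have hFz : ∃ z ∈ Icc (0:NNReal) B, F z = 0 := by
      by_contra hcon
      push_neg at hcon
      have hne' : (Icc (0:NNReal) B).Nonempty := ⟨0, left_mem_Icc.mpr (zero_le : (0:NNReal) ≤ B)⟩
      obtain ⟨z, hz, hzmin⟩ := isCompact_Icc.exists_isMinOn hne' hFSO.1.continuousOn
      have hδ : 0 < F z := lt_of_le_of_ne (hF0 z) (Ne.symm (hcon z hz))
      set w : NNReal → ℝ := (F z)⁻¹ • F + (1:ℝ) • u with hwdef
      have hwSO : SO w := SO_comb hFSO huSO _ 1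
      have hle : oneF ≤ w := by
        intro t'
        simp only [hwdef, Pi.add_apply, Pi.smul_apply, smul_eq_mul, one_mul]
        by_cases hts : t' ≤ B
        · have hmin : F z ≤ F t' := hzmin ⟨zero_le, hts⟩
          have h2 : 1 ≤ (F z)⁻¹ * F t' := by
            rw [← div_eq_inv_mul]
            exact (one_le_div hδ).mpr hmin
          have := hu0 t'
          show (1:ℝ) ≤ (F z)⁻¹ * F t' + u t'
          linarith
        · push_neg at hts
          have hBt : ((n:ℝ)+1)^2 ≤ (t':ℝ) := by
            rw [← hBcoe]; exact_mod_cast hts.le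
          have h3 := hu1 t' hBt
          have h4 : 0 ≤ (F z)⁻¹ * F t' :=
            mul_nonneg (inv_nonneg.mpr hδ.le) (hF0 t')
          show (1:ℝ) ≤ (F z)⁻¹ * F t' + u t'
          linarith
      have hmn := hom_mono hφ SO_one hwSO hle
      rw [hwdef, hφ.1 F u hFSO huSO _ 1, hφF, hφu] at hmn
      rw [← hcdef] at hmn
      simp at hmn
      linarith
    obtain ⟨z, hzB, hzF⟩ := hFz
    refine ⟨z, hzB, ?_⟩
    simp only [mem_iInter, mem_preimage, mem_singleton_iff]
    intro i hi
    have h1 : 0 ≤ (∑ j ∈ t, (j : {h : NNReal → ℝ // SO h ∧ (∀ x, 0 ≤ h x) ∧ φ h = 0}).1) z := by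
      rw [Finset.sum_apply]
      exact Finset.sum_nonneg fun j _ => j.2.2.1 z
    have h2 : (∑ j ∈ t, (j : {h : NNReal → ℝ // SO h ∧ (∀ x, 0 ≤ h x) ∧ φ h = 0}).1) z = 0 := by
      have h3 : F z = u z + (∑ j ∈ t, (j : {h : NNReal → ℝ // SO h ∧ (∀ x, 0 ≤ h x) ∧ φ h = 0}).1) z := rfl
      rw [h3] at hzF
      linarith [hu0 z]
    rw [Finset.sum_apply] at h2
    have h4 := (Finset.sum_eq_zero_iff_of_nonneg (fun j _ => j.2.2.1 z)).mp h2
    exact h4 i hi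
  obtain ⟨x₀, hx₀B, hx₀Z⟩ := IsCompact.inter_iInter_nonempty
    (isCompact_Icc : IsCompact (Icc (0:NNReal) B))
    (fun i : {h : NNReal → ℝ // SO h ∧ (∀ x, 0 ≤ h x) ∧ φ h = 0} => i.1 ⁻¹' {0})
    (fun i => IsClosed.preimage i.2.1.1 isClosed_singleton) hFIP
  -- main representation
  have hmain : ∀ f : NNReal → ℝ, SO f → φ f = c * f x₀ := by
    intro f hf
    set r : ℝ := φ f / c with hrdef
    set f2 : NNReal → ℝ := (1:ℝ) • f + (-r) • oneF with hf2def
    have hf2SO : SO f2 := SO_comb hf hone 1 (-r)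
    have hφf2 : φ f2 = 0 := by
      rw [hf2def, hφ.1 f oneF hf hone 1 (-r), ← hcdef, hrdef]
      field_simp
      ring
    obtain ⟨h, hhSO, hhabs, hφh⟩ := abs_hom hφ hf2SO
    have hh0 : ∀ t, 0 ≤ h t := fun t => by rw [hhabs t]; exact abs_nonneg _
    have hφh0 : φ h = 0 := by rw [hφh, hφf2, abs_zero]
    rw [mem_iInter] at hx₀Z
    have hz := hx₀Z ⟨h, hhSO, hh0, hφh0⟩
    rw [mem_preimage, mem_singleton_iff] at hz
    have hz2 : h x₀ = 0 := hz
    rw [hhabs x₀] at hz2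
    have hfx : f2 x₀ = 0 := abs_eq_zero.mp hz2
    have hfx2 : f x₀ - r = 0 := by
      have : f2 x₀ = f x₀ - r := by
        simp only [hf2def, Pi.add_apply, Pi.smul_apply, smul_eq_mul, one_mul]
        ring
      rw [this] at hfx
      exact hfx
    have hfr : f x₀ = φ f / c := by rw [← hrdef]; linarith
    rw [hfr]
    field_simp
  refine ⟨(x₀, c), ⟨hc, fun f hf => hmain f hf⟩, ?_⟩
  rintro ⟨y, cq⟩ ⟨hcq, hq⟩
  have hcqc : cq = c := by
    have h1 := hq oneF SO_one
    simpa [← hcdef] using h1.symm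
  have hyx : y = x₀ := by
    by_contra hyne
    set d : ℝ := dist y x₀ with hddef
    have hd : 0 < d := dist_pos.mpr hyne
    set b : NNReal → ℝ := fun t => max 0 (1 - dist t y / d) with hbdef
    have hbcont : Continuous b :=
      continuous_const.max (continuous_const.sub
        ((continuous_id.dist continuous_const).div_const d))
    have hbSO : SO b := by
      refine ⟨hbcont, fun R hR ε hε => ?_⟩
      refine ⟨y + Real.toNNReal d + 1, lt_of_lt_of_le one_pos le_add_self, fun x hx => ?_⟩
      have hzero : ∀ t' ∈ Icc x (x+R), b t' = 0 := by
        intro t' ht'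
        have h1 : (x:ℝ) ≤ t' := by exact_mod_cast ht'.1
        have h2 : ((y + Real.toNNReal d + 1 : NNReal):ℝ) < x := by exact_mod_cast hx
        have hdc : ((Real.toNNReal d : NNReal):ℝ) = d := Real.coe_toNNReal _ hd.le
        rw [NNReal.coe_add, NNReal.coe_add, hdc] at h2
        have h3 : ((y:ℝ) + d) < (t':ℝ) := by
          push_cast at h2 ⊢
          linarith
        have h4 : d ≤ dist t' y := by
          rw [NNReal.dist_eq]
          calc d ≤ (t':ℝ) - y := by linarith
            _ ≤ |(t':ℝ) - y| := le_abs_self _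
        have h5 : 1 - dist t' y / d ≤ 0 := by
          rw [sub_nonpos]
          exact (one_le_div hd).mpr h4
        rw [hbdef]
        exact max_eq_left h5
      have hss : (b '' Icc x (x+R)).Subsingleton := by
        rintro _ ⟨p1, hp1, rfl⟩ _ ⟨p2, hp2, rfl⟩
        rw [hzero p1 hp1, hzero p2 hp2]
      rw [Metric.diam_subsingleton hss]
      exact hε
    have hby : b y = 1 := by
      rw [hbdef]
      simp [dist_self]
    have hbx : b x₀ = 0 := by
      rw [hbdef]
      have : dist x₀ y = d := by rw [hddef, dist_comm]
      simp only [this]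
      rw [div_self hd.ne']
      simp
    have e1 := hq b hbSO
    have e2 := hmain b hbSO
    rw [hby] at e1
    rw [hbx] at e2
    rw [hcqc] at e1
    rw [e2] at e1
    simp at e1
    linarith
  exact Prod.ext hyx hcqc
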